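/- For every d ∈ ℕ and every real α < 1, there exists a finite set B of orthonormal bases of ℂ^d such that for every finite set S and every projection-valued measurement E = {E_s : s ∈ S} over ℂ^d, there is a basis {v₁,…,v_d} ∈ B and a partition {τ_s : s ∈ S} of [d] with ‖E_s v_j‖ > α for every s ∈ S and every j ∈ τ_s. -/

import Mathlib

noncomputable section

/-- An orthogonal projector on the Hilbert space `ℂ^d`. -/
def IsProjector {d : ℕ}
    (E : EuclideanSpace ℂ (Fin d) →L[ℂ] EuclideanSpace ℂ (Fin d)) : Prop :=
  IsSelfAdjoint E ∧ E ∘L E = E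

/-- A projection-valued measurement over `ℂ^d` indexed by a finite set `S`. -/
def IsPVM {d : ℕ} {S : Type} [Fintype S]
    (E : S → (EuclideanSpace ℂ (Fin d) →L[ℂ] EuclideanSpace ℂ (Fin d))) : Prop :=
  (∀ s, IsProjector (E s)) ∧ ∑ s, E s = 1

open scoped InnerProductSpace

/-! The ranges of the projections of a PVM are pairwise orthogonal (`E s ≤ 1 - E t` forces
`E s * E t = 0`) and span the space, so every PVM is diagonalised by an orthonormal basis `v` with
`E (p j) (v j) = v j`. Orthonormal `d`-tuples form a compact set, hence admit a finite
`(1 - α)`-net; as projections are contractions, a net point `y` within `1 - α` of `v` satisfies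
`‖E (p j) (y j)‖ ≥ 1 - ‖v j - y j‖ > α`. -/

theorem IsProjector.isStarProjection {d : ℕ}
    {E : EuclideanSpace ℂ (Fin d) →L[ℂ] EuclideanSpace ℂ (Fin d)} (h : IsProjector E) :
    IsStarProjection E :=
  ⟨h.2, h.1⟩

theorem IsStarProjection.mul_eq_zero_of_sum_eq_one {A : Type*} [CStarAlgebra A] [PartialOrder A]
    [StarOrderedRing A] {ι : Type*} [Fintype ι] {p : ι → A} (hp : ∀ i, IsStarProjection (p i))
    (hsum : ∑ i, p i = 1) {i j : ι} (hij : i ≠ j) :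
    p i * p j = 0 := by
  classical
  have hle : p i ≤ 1 - p j := by
    rw [← hsum, ← Finset.sum_erase_eq_sub (Finset.mem_univ j)]
    exact Finset.single_le_sum (fun k _ => (hp k).nonneg)
      (Finset.mem_erase.2 ⟨hij, Finset.mem_univ i⟩)
  have h := ((hp i).le_iff_mul_eq_left (hp j).one_sub).1 hle
  rwa [mul_sub, mul_one, sub_eq_self] at h

theorem iSup_range_eq_top_of_sum_eq_one {R M ι : Type*} [Semiring R] [AddCommMonoid M]
    [Module R M] [Fintype ι] {f : ι → M →ₗ[R] M} (hsum : ∑ i, f i = 1) :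
    ⨆ i, LinearMap.range (f i) = ⊤ := by
  refine eq_top_iff.2 fun x _ => ?_
  have hx : ∑ i, f i x = x := by rw [← LinearMap.sum_apply, hsum, Module.End.one_apply]
  rw [← hx]
  exact Submodule.sum_mem _ fun i _ => Submodule.mem_iSup_of_mem i (LinearMap.mem_range_self _ _)

section StarProjection

variable {H : Type*} [NormedAddCommGroup H] [InnerProductSpace ℂ H] [CompleteSpace H]
  {S : Type*} [Fintype S] {P : S → H →L[ℂ] H}

theorem IsStarProjection.apply_eq_of_mem_range {Q : H →L[ℂ] H} (hQ : IsStarProjection Q) {x : H}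
    (hx : x ∈ Q.range) : Q x = x := by
  obtain ⟨y, rfl⟩ := hx
  exact congr($(hQ.isIdempotentElem.eq) y)

theorem orthogonalFamily_range_of_sum_eq_one (hP : ∀ s, IsStarProjection (P s))
    (hsum : ∑ s, P s = 1) :
    OrthogonalFamily ℂ (fun s => (P s).range) (fun s => (P s).range.subtypeₗᵢ) := by
  rintro s t hst ⟨x, hx⟩ ⟨y, hy⟩
  calc ⟪x, y⟫_ℂ = ⟪P s x, P t y⟫_ℂ := by
        rw [(hP s).apply_eq_of_mem_range hx, (hP t).apply_eq_of_mem_range hy]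
    _ = ⟪x, (P s * P t) y⟫_ℂ := by
        rw [← ContinuousLinearMap.adjoint_inner_right, ← ContinuousLinearMap.star_eq_adjoint,
          (hP s).isSelfAdjoint.star_eq, mul_apply_eq_comp]
    _ = 0 := by
        rw [IsStarProjection.mul_eq_zero_of_sum_eq_one hP hsum hst, zero_apply, inner_zero_right]

theorem exists_orthonormalBasis_of_sum_eq_one [FiniteDimensional ℂ H] {ι : Type*} [Fintype ι]
    (hι : Fintype.card ι = Module.finrank ℂ H) (hP : ∀ s, IsStarProjection (P s))
    (hsum : ∑ s, P s = 1) :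
    ∃ (b : OrthonormalBasis ι ℂ H) (p : ι → S), ∀ j, P (p j) (b j) = b j := by
  classical
  have hOrth := orthogonalFamily_range_of_sum_eq_one hP hsum
  have hsum' : ∑ s, (P s : H →ₗ[ℂ] H) = 1 := by
    rw [← ContinuousLinearMap.toLinearMap_sum, hsum]
    rfl
  have hInt : DirectSum.IsInternal fun s => (P s).range := hOrth.isInternal_iff.2 <| by
    rw [iSup_range_eq_top_of_sum_eq_one hsum', Submodule.top_orthogonal_eq_bot]
  let b := hInt.collectedOrthonormalBasis hOrth fun s => stdOrthonormalBasis ℂ _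
  let e : (Σ s, Fin (Module.finrank ℂ (P s).range)) ≃ ι :=
    Fintype.equivOfCardEq <| by rw [hι, Module.finrank_eq_card_basis b.toBasis]
  refine ⟨b.reindex e, fun j => (e.symm j).1, fun j => ?_⟩
  rw [OrthonormalBasis.reindex_apply]
  exact (hP _).apply_eq_of_mem_range (hInt.collectedOrthonormalBasis_mem hOrth _ _)

theorem IsStarProjection.norm_sub_dist_le_norm_apply {Q : H →L[ℂ] H} (hQ : IsStarProjection Q)
    {v : H} (hv : Q v = v) (y : H) : ‖v‖ - dist v y ≤ ‖Q y‖ := by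
  calc ‖v‖ - dist v y = ‖Q v‖ - ‖v - y‖ := by rw [hv, dist_eq_norm]
    _ ≤ ‖Q v‖ - ‖Q (v - y)‖ := by
        gcongr
        simpa using Q.le_of_opNorm_le hQ.norm_le (v - y)
    _ ≤ ‖Q y‖ := by
        rw [map_sub]
        linarith [norm_sub_norm_le (Q v) (Q y)]

end StarProjection

theorem isClosed_setOf_orthonormal {𝕜 E ι : Type*} [RCLike 𝕜] [NormedAddCommGroup E]
    [InnerProductSpace 𝕜 E] :
    IsClosed {v : ι → E | Orthonormal 𝕜 v} := by
  classical
  simp only [orthonormal_iff_ite, Set.ofPred_forall]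
  exact isClosed_iInter fun i => isClosed_iInter fun j =>
    isClosed_eq ((continuous_apply i).inner (continuous_apply j)) continuous_const

theorem isCompact_setOf_orthonormal {𝕜 E ι : Type*} [RCLike 𝕜] [NormedAddCommGroup E]
    [InnerProductSpace 𝕜 E] [ProperSpace E] [Fintype ι] :
    IsCompact {v : ι → E | Orthonormal 𝕜 v} := by
  refine Metric.isCompact_of_isClosed_isBounded (isClosed_setOf_orthonormal (𝕜 := 𝕜))
    ((Metric.isBounded_closedBall (x := 0) (r := 1)).subset fun v hv => ?_)
  rw [Metric.mem_closedBall, dist_zero_right, pi_norm_le_iff_of_nonneg zero_le_one]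
  exact fun j => (hv.1 j).le

theorem IsCompact.exists_fin_net {X : Type*} [PseudoMetricSpace X] {K : Set X}
    (hK : IsCompact K) {ε : ℝ} (hε : 0 < ε) :
    ∃ (N : ℕ) (x : Fin N → X), (∀ i, x i ∈ K) ∧ ∀ y ∈ K, ∃ i, dist y (x i) < ε := by
  obtain ⟨t, htK, htfin, hcover⟩ := hK.finite_cover_balls hε
  obtain ⟨N, x, rfl⟩ := htfin.fin_embedding
  refine ⟨N, x, fun i => htK ⟨i, rfl⟩, fun y hy => ?_⟩
  obtain ⟨_, ⟨i, rfl⟩, hyi⟩ := Set.mem_iUnion₂.1 (hcover hy)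
  exact ⟨i, hyi⟩

/-- For every `d` and every `α < 1` there is a finite set of orthonormal bases of `ℂ^d`
(a family indexed by `Fin N`) such that every PVM over `ℂ^d` is "almost diagonalised"
by one of them: for some basis in the family and some partition of `[d]` (encoded by
`p : Fin d → S`), each basis vector `v_j` satisfies `‖E_{p j} v_j‖ > α`. -/
theorem finite_indicator_bases (d : ℕ) (α : ℝ) (hα : α < 1) :
    ∃ (N : ℕ) (B : Fin N → (Fin d → EuclideanSpace ℂ (Fin d))),
      (∀ b : Fin N, Orthonormal ℂ (B b)) ∧
      ∀ (S : Type) [Fintype S]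
        (E : S → (EuclideanSpace ℂ (Fin d) →L[ℂ] EuclideanSpace ℂ (Fin d))),
        IsPVM E →
        ∃ (b : Fin N) (p : Fin d → S), ∀ j : Fin d, α < ‖E (p j) (B b j)‖ := by
  have hK : IsCompact {v : Fin d → EuclideanSpace ℂ (Fin d) | Orthonormal ℂ v} :=
    isCompact_setOf_orthonormal
  obtain ⟨N, B, hB, hnet⟩ := hK.exists_fin_net (sub_pos.2 hα)
  refine ⟨N, B, hB, fun S _ E hE => ?_⟩
  have hP s := (hE.1 s).isStarProjection
  obtain ⟨v, p, hv⟩ := exists_orthonormalBasis_of_sum_eq_one (ι := Fin d) (by simp) hP hE.2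
  obtain ⟨b, hb⟩ := hnet v v.orthonormal
  refine ⟨b, p, fun j => ?_⟩
  calc α < ‖v j‖ - dist (v j) (B b j) := by
        rw [v.norm_eq_one]
        linarith [(dist_le_pi_dist _ _ j).trans_lt hb]
    _ ≤ _ := (hP _).norm_sub_dist_le_norm_apply (hv j) _
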